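/- Let X be a strongly 0-dimensional metrizable space. Then every open cover {U_i}_{i∈I} of X has a refinement {E_j}_{j∈J} such that each E_j is open in X, the E_j cover X, and E_j ∩ E_{j'} = ∅ whenever j ≠ j'; moreover each such E_j is clopen in X. -/

import Mathlib

/-!
A metrizable space is paracompact and normal, so an open cover has a locally finite open precise
refinement `v` together with a shrinking `w` with `closure (w i) ⊆ v i` that still covers.
Strong zero-dimensionality gives clopen sets `W i` between `closure (w i)` and `v i`.
Well-order the index set and replace `W i` by `W i \ ⋃ j < i, W j`: these sets are pairwise
disjoint, still cover, and stay clopen because a locally finite union of clopen sets is clopen.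
-/

open Set

def StronglyZeroDim (X : Type*) [TopologicalSpace X] : Prop :=
  ∀ A B : Set X, IsClosed A → IsClosed B → Disjoint A B →
    ∃ V : Set X, IsClopen V ∧ A ⊆ V ∧ Disjoint V B

open Function

theorem StronglyZeroDim.exists_isClopen_between {X : Type*} [TopologicalSpace X]
    (hX : StronglyZeroDim X) {A V : Set X} (hA : IsClosed A) (hV : IsOpen V) (hAV : A ⊆ V) :
    ∃ W, IsClopen W ∧ A ⊆ W ∧ W ⊆ V := by
  obtain ⟨W, hW, hAW, hWV⟩ := hX A Vᶜ hA hV.isClosed_compl (disjoint_compl_right_iff_subset.2 hAV)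
  exact ⟨W, hW, hAW, disjoint_compl_right_iff_subset.1 hWV⟩

theorem StronglyZeroDim.exists_locallyFinite_isClopen_refinement {X ι : Type*}
    [TopologicalSpace X] [ParacompactSpace X] [NormalSpace X] (hX : StronglyZeroDim X)
    (U : ι → Set X) (hUopen : ∀ i, IsOpen (U i)) (hUcover : ⋃ i, U i = univ) :
    ∃ W : ι → Set X, (∀ i, IsClopen (W i)) ∧ ⋃ i, W i = univ ∧ LocallyFinite W ∧
      ∀ i, W i ⊆ U i := by
  obtain ⟨v, hvopen, hvcover, hvlf, hvU⟩ := precise_refinement U hUopen hUcover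
  obtain ⟨w, hwcover, -, hwv⟩ := exists_subset_iUnion_closure_subset isClosed_univ hvopen
    (fun x _ => hvlf.point_finite x) hvcover.ge
  choose W hWclopen hwW hWv using fun i =>
    hX.exists_isClopen_between isClosed_closure (hvopen i) (hwv i)
  refine ⟨W, hWclopen, univ_subset_iff.1 ?_, hvlf.subset hWv, fun i => (hWv i).trans (hvU i)⟩
  exact hwcover.trans (iUnion_mono fun i => subset_closure.trans (hwW i))

theorem LocallyFinite.isClosed_biUnion {X ι : Type*} [TopologicalSpace X] {f : ι → Set X}
    (hf : LocallyFinite f) {s : Set ι} (hc : ∀ i ∈ s, IsClosed (f i)) :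
    IsClosed (⋃ i ∈ s, f i) := by
  rw [biUnion_eq_iUnion]
  exact (hf.comp_injective Subtype.val_injective).isClosed_iUnion fun i => hc i i.2

section TransfiniteDisjointed

variable {α ι : Type*} [LinearOrder ι]

/-- Unlike `disjointed`, this needs no `LocallyFiniteOrderBot ι`, so it can be used along an
arbitrary well order. -/
def transfiniteDisjointed (f : ι → Set α) (i : ι) : Set α :=
  f i \ ⋃ j ∈ Iio i, f j

theorem transfiniteDisjointed_subset (f : ι → Set α) (i : ι) :
    transfiniteDisjointed f i ⊆ f i :=
  sdiff_subset

theorem pairwise_disjoint_transfiniteDisjointed (f : ι → Set α) :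
    Pairwise (Disjoint on transfiniteDisjointed f) := by
  have key : ∀ i j, i < j → Disjoint (transfiniteDisjointed f i) (transfiniteDisjointed f j) :=
    fun i j hij => disjoint_left.2 fun x hxi hxj => hxj.2 (mem_biUnion hij hxi.1)
  intro i j hne
  rcases hne.lt_or_gt with h | h
  · exact key i j h
  · exact (key j i h).symm

theorem iUnion_transfiniteDisjointed [WellFoundedLT ι] (f : ι → Set α) :
    ⋃ i, transfiniteDisjointed f i = ⋃ i, f i := by
  refine (iUnion_mono (transfiniteDisjointed_subset f)).antisymm fun x hx => ?_
  obtain ⟨i, hi, hmin⟩ := WellFounded.has_min wellFounded_lt {i | x ∈ f i} (mem_iUnion.1 hx)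
  refine mem_iUnion.2 ⟨i, hi, fun hlt => ?_⟩
  obtain ⟨j, hj, hxj⟩ := mem_iUnion₂.1 hlt
  exact hmin j hxj hj

theorem LocallyFinite.isClopen_transfiniteDisjointed [TopologicalSpace α] {f : ι → Set α}
    (hf : LocallyFinite f) (hc : ∀ i, IsClopen (f i)) (i : ι) :
    IsClopen (transfiniteDisjointed f i) :=
  (hc i).diff ⟨hf.isClosed_biUnion fun j _ => (hc j).isClosed,
    isOpen_biUnion fun j _ => (hc j).isOpen⟩

end TransfiniteDisjointed

theorem exists_pairwise_disjoint_open_refinement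
    {X : Type*} [TopologicalSpace X] [TopologicalSpace.MetrizableSpace X]
    (hX : StronglyZeroDim X) {ι : Type*} (U : ι → Set X)
    (hUopen : ∀ i, IsOpen (U i)) (hUcover : ⋃ i, U i = Set.univ) :
    ∃ 𝒠 : Set (Set X),
      (∀ E ∈ 𝒠, ∃ i, E ⊆ U i) ∧
      (∀ E ∈ 𝒠, IsOpen E) ∧
      ⋃₀ 𝒠 = Set.univ ∧
      (𝒠.Pairwise fun E F => Disjoint E F) ∧
      (∀ E ∈ 𝒠, IsClopen E) := by
  let := TopologicalSpace.metrizableSpaceMetric X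
  obtain ⟨W, hWclopen, hWcover, hWlf, hWU⟩ :=
    hX.exists_locallyFinite_isClopen_refinement U hUopen hUcover
  obtain ⟨_, _⟩ := exists_wellFoundedLT ι
  have hEclopen := hWlf.isClopen_transfiniteDisjointed hWclopen
  refine ⟨range (transfiniteDisjointed W), ?_, ?_, ?_,
    (pairwise_disjoint_transfiniteDisjointed W).range_pairwise, ?_⟩
  · rintro _ ⟨i, rfl⟩
    exact ⟨i, (transfiniteDisjointed_subset W i).trans (hWU i)⟩
  · rintro _ ⟨i, rfl⟩
    exact (hEclopen i).isOpen
  · rw [sUnion_range, iUnion_transfiniteDisjointed, hWcover]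
  · rintro _ ⟨i, rfl⟩
    exact hEclopen i
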